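/- Let H be a k-uniform hypergraph on vertex set V₁ ∪ V₂ (|V₁| = n₁ even) satisfying conditions (a) and (b) of GM-type switching, and fix a (k−1)-set {i₂,...,i_k} ⊆ V₂ with exactly n₁/2 neighbors in V₁. Let P be block diagonal with block (2/n₁)J − I on V₁ and identity on V₂. Then for i₁ ∈ V₁: (P·A_H·Pᵀ)_{i1 i2...ik} = 1/(k−1)! if i₁ is not a neighbor of {i₂,...,i_k} in H, and equals 0 if i₁ is a neighbor of {i₂,...,i_k} in H. -/

import Mathlib

/-- Adjacency tensor of a k-uniform hypergraph on `Fin n`. -/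
noncomputable def adjTensor {n : ℕ} (k : ℕ) (H : Finset (Finset (Fin n))) :
    (Fin k → Fin n) → ℝ :=
  fun i => if Function.Injective i ∧ Finset.univ.image i ∈ H
    then 1 / (Nat.factorial (k - 1) : ℝ) else 0

/-- The triple product P·A·Pᵀ of an order-k tensor with an n×n matrix. -/
noncomputable def tensorConj {n k : ℕ} (P : Matrix (Fin n) (Fin n) ℝ)
    (A : (Fin k → Fin n) → ℝ) : (Fin k → Fin n) → ℝ :=
  fun i => ∑ j : Fin k → Fin n, A j * ∏ t : Fin k, P (i t) (j t)

/-- Block diagonal matrix with block `(2/n₁)J − I` on `V₁` and identity on the complement. -/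
noncomputable def switchMatrix {n : ℕ} (V₁ : Finset (Fin n)) : Matrix (Fin n) (Fin n) ℝ :=
  fun i j =>
    if i ∈ V₁ ∧ j ∈ V₁ then 2 / (V₁.card : ℝ) - (if i = j then 1 else 0)
    else if i ∉ V₁ ∧ j ∉ V₁ ∧ i = j then 1 else 0

/-! Every index other than `i₁` lies in `V₂`, where `P` acts as the identity, so the entry is
`c · ∑_{w ∈ V₁} [w ∈ N(U)] (2/n₁ - δ_{i₁ w}) = c · (2|N(U)|/n₁ - [i₁ ∈ N(U)])` with
`c = 1/(k-1)!`, and `|N(U)| = n₁/2` makes the first term `c`. -/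

open Finset Function

section UpdateAt

variable {α β : Type*} [Fintype α] [DecidableEq α] [DecidableEq β]

theorem image_univ_update (i : α → β) (z : α) (w : β) :
    univ.image (update i z w) = insert w ((univ.erase z).image i) := by
  conv_lhs => rw [← insert_erase (mem_univ z), image_insert, update_self]
  refine congrArg _ (image_congr fun t ht => update_of_ne ?_ w i)
  exact ne_of_mem_erase ht

theorem injective_update_of_notMem_image_erase {i : α → β} (hi : Injective i) {z : α} {w : β}
    (hw : w ∉ (univ.erase z).image i) : Injective (update i z w) := by
  have hmem : ∀ t ≠ z, i t ∈ (univ.erase z).image i :=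
    fun t ht => mem_image_of_mem i (mem_erase.mpr ⟨ht, mem_univ t⟩)
  intro s t hst
  simp only [update_apply] at hst
  split_ifs at hst with hs ht ht
  · exact hs.trans ht.symm
  · exact absurd (hst ▸ hmem t ht) hw
  · exact absurd (hst ▸ hmem s hs) hw
  · exact hi hst

end UpdateAt

theorem adjTensor_update {n k : ℕ} (H : Finset (Finset (Fin n))) {i : Fin k → Fin n}
    (hi : Injective i) {z : Fin k} {w : Fin n} (hw : w ∉ (univ.erase z).image i) :
    adjTensor k H (update i z w) =
      if insert w ((univ.erase z).image i) ∈ H then 1 / ((k - 1).factorial : ℝ) else 0 := by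
  simp only [adjTensor, image_univ_update, injective_update_of_notMem_image_erase hi hw, true_and]

theorem tensorConj_apply_eq_sum_update {n k : ℕ} (P : Matrix (Fin n) (Fin n) ℝ)
    (A : (Fin k → Fin n) → ℝ) (i : Fin k → Fin n) (z : Fin k)
    (hP : ∀ t ≠ z, P (i t) = Pi.single (i t) 1) :
    tensorConj P A i = ∑ w, A (update i z w) * P (i z) w := by
  have hprod : ∀ j : Fin k → Fin n, ∏ t, P (i t) (j t) ≠ 0 → j = update i z (j z) := by
    intro j hj
    funext t
    rcases eq_or_ne t z with rfl | ht
    · rw [update_self]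
    · rw [update_of_ne ht]
      by_contra hne
      exact hj (prod_eq_zero (mem_univ t) (by rw [hP t ht, Pi.single_eq_of_ne hne]))
  have hsupp : ∑ j, A j * ∏ t, P (i t) (j t)
      = ∑ j ∈ univ.image (update i z), A j * ∏ t, P (i t) (j t) := by
    refine (sum_subset (subset_univ _) fun j _ hj => ?_).symm
    by_contra h
    exact hj (mem_image.mpr ⟨j z, mem_univ _, (hprod j (right_ne_zero_of_mul h)).symm⟩)
  rw [tensorConj, hsupp, sum_image fun a _ b _ h => update_injective i z h]
  refine sum_congr rfl fun w _ => congrArg _ ?_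
  rw [Fintype.prod_eq_single z fun t ht => by rw [update_of_ne ht, hP t ht, Pi.single_eq_same],
    update_self]

section SwitchMatrix

variable {n : ℕ} (V₁ : Finset (Fin n))

theorem switchMatrix_row_of_notMem {x : Fin n} (hx : x ∉ V₁) :
    switchMatrix V₁ x = Pi.single x 1 := by
  funext w
  by_cases hw : w ∈ V₁
  · simp [switchMatrix, hx, hw, ne_of_mem_of_not_mem hw hx]
  · simp [switchMatrix, hx, hw, Pi.single_apply, eq_comm]

theorem switchMatrix_apply_of_mem_of_notMem {x w : Fin n} (hx : x ∈ V₁) (hw : w ∉ V₁) :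
    switchMatrix V₁ x w = 0 := by
  simp [switchMatrix, hx, hw]

theorem sum_switchMatrix_mul_ite (p : Fin n → Prop) [DecidablePred p] (c : ℝ) {x : Fin n}
    (hx : x ∈ V₁) :
    ∑ w ∈ V₁, (if p w then c else 0) * switchMatrix V₁ x w =
      c * (2 * (V₁.filter p).card / V₁.card - if p x then 1 else 0) := by
  have hV : ∀ w ∈ V₁, (if p w then c else 0) * switchMatrix V₁ x w =
      (if p w then c * (2 / V₁.card) else 0) - (if x = w then (if p w then c else 0) else 0) := by
    intro w hw
    simp only [switchMatrix, hx, hw, and_self, if_true]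
    split_ifs <;> ring
  rw [sum_congr rfl hV, sum_sub_distrib, ← sum_filter, sum_const, sum_ite_eq, if_pos hx,
    nsmul_eq_mul]
  split_ifs <;> ring

end SwitchMatrix

theorem stmt14_general {n k : ℕ} (hk : 1 ≤ k) (V₁ V₂ : Finset (Fin n))
    (hdisj : Disjoint V₁ V₂) (heven : Even V₁.card)
    (H : Finset (Finset (Fin n)))
    (U : Finset (Fin n)) (hU : U ⊆ V₂)
    (hhalf : (V₁.filter (fun w => insert w U ∈ H)).card = V₁.card / 2)
    (i : Fin k → Fin n) (hinj : Function.Injective i) (hi0 : i ⟨0, hk⟩ ∈ V₁)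
    (himg : Finset.univ.image i = insert (i ⟨0, hk⟩) U) :
    tensorConj (switchMatrix V₁) (adjTensor k H) i =
      if insert (i ⟨0, hk⟩) U ∈ H then 0 else 1 / (Nat.factorial (k - 1) : ℝ) := by
  set z : Fin k := ⟨0, hk⟩
  have hUV₁ : ∀ x ∈ U, x ∉ V₁ := fun x hx h => disjoint_left.mp hdisj h (hU hx)
  have hrest : (univ.erase z).image i = U := by
    rw [image_erase hinj, himg, erase_insert fun h => hUV₁ _ h hi0]
  have hrows : ∀ t ≠ z, switchMatrix V₁ (i t) = Pi.single (i t) 1 := fun t ht =>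
    switchMatrix_row_of_notMem V₁ <| hUV₁ _ <|
      hrest ▸ mem_image_of_mem i (mem_erase.mpr ⟨ht, mem_univ t⟩)
  have houtside : ∀ w ∉ V₁, adjTensor k H (update i z w) * switchMatrix V₁ (i z) w = 0 :=
    fun w hw => by rw [switchMatrix_apply_of_mem_of_notMem V₁ hi0 hw, mul_zero]
  have hinside : ∀ w ∈ V₁, adjTensor k H (update i z w) =
      if insert w U ∈ H then 1 / ((k - 1).factorial : ℝ) else 0 := fun w hw => by
    rw [adjTensor_update H hinj (hrest ▸ fun h => hUV₁ w h hw), hrest]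
  have hhalf_ratio : 2 * ((V₁.card / 2 : ℕ) : ℝ) / V₁.card = 1 := by
    rw [← Nat.cast_two, ← Nat.cast_mul, Nat.two_mul_div_two_of_even heven,
      div_self (Nat.cast_ne_zero.mpr (card_ne_zero_of_mem hi0))]
  rw [tensorConj_apply_eq_sum_update _ _ i z hrows,
    ← sum_subset (subset_univ V₁) fun w _ => houtside w,
    sum_congr rfl fun w hw => by rw [hinside w hw], sum_switchMatrix_mul_ite V₁ _ _ hi0, hhalf,
    hhalf_ratio]
  split_ifs <;> ring

theorem stmt14 {n k : ℕ} (hk : 1 ≤ k) (V₁ V₂ : Finset (Fin n))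
    (hdisj : Disjoint V₁ V₂) (hcover : V₁ ∪ V₂ = Finset.univ) (heven : Even V₁.card)
    (H : Finset (Finset (Fin n))) (huni : ∀ e ∈ H, e.card = k)
    (ha : ∀ e ∈ H, (e ∩ V₁).card ≤ 1)
    (hb : ∀ U ⊆ V₂, U.card = k - 1 →
      (V₁.filter (fun w => insert w U ∈ H)).card = 0 ∨
      (V₁.filter (fun w => insert w U ∈ H)).card = V₁.card / 2 ∨
      (V₁.filter (fun w => insert w U ∈ H)).card = V₁.card)
    (U : Finset (Fin n)) (hU : U ⊆ V₂) (hUcard : U.card = k - 1)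
    (hhalf : (V₁.filter (fun w => insert w U ∈ H)).card = V₁.card / 2)
    (i : Fin k → Fin n) (hinj : Function.Injective i) (hi0 : i ⟨0, hk⟩ ∈ V₁)
    (himg : Finset.univ.image i = insert (i ⟨0, hk⟩) U) :
    tensorConj (switchMatrix V₁) (adjTensor k H) i =
      if insert (i ⟨0, hk⟩) U ∈ H then 0 else 1 / (Nat.factorial (k - 1) : ℝ) :=
  stmt14_general hk V₁ V₂ hdisj heven H U hU hhalf i hinj hi0 himg
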